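/- Take g = X, so that in 𝒢 the defining relations become a·c = c·a + c², c·u = u·c, a·u = u·a + u·c, b·c = c·b + c·(2a + u + c), b·u = u·b + u·(2a + u + c), b·a = (a + c)·b + (c − u)·a. Then 𝒢 is isomorphic as a k-algebra to M_J(2), via the map induced by a ↦ a, b ↦ b, c ↦ c, u ↦ d − a. -/
import Mathlib


open Polynomial

noncomputable section

/-- `h = c·g'(c)` in the free algebra on generators `a = ι 0`, `b = ι 1`, `c = ι 2`,
`u = ι 3`. -/
def Gh (k : Type) [Field k] (g : k[X]) : FreeAlgebra k (Fin 4) :=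
  FreeAlgebra.ι k 2 * aeval (FreeAlgebra.ι k 2) (derivative g)

/-- `γ = h + u + 2a` in the free algebra. -/
def Gγ (k : Type) [Field k] (g : k[X]) : FreeAlgebra k (Fin 4) :=
  Gh k g + FreeAlgebra.ι k 3 + 2 * FreeAlgebra.ι k 0

/-- Defining relations of the generalized Jordanian matrix algebra `𝒢` (for `f = X·g`):
with `a = ι 0`, `b = ι 1`, `c = ι 2`, `u = ι 3`, `h = c·g'(c)`, `γ = h + u + 2a`,
the relations are `a·c = c·a + c·g(c)`, `c·u = u·c`, `a·u = u·a + u·g(c)`,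
`b·c = c·b + c·γ`, `b·u = u·b + u·γ`, and `b·a = (a + h)·b + (h − u)·a`. -/
inductive GRel (k : Type) [Field k] (g : k[X]) :
    FreeAlgebra k (Fin 4) → FreeAlgebra k (Fin 4) → Prop
  | ac : GRel k g (FreeAlgebra.ι k 0 * FreeAlgebra.ι k 2)
      (FreeAlgebra.ι k 2 * FreeAlgebra.ι k 0 +
        FreeAlgebra.ι k 2 * aeval (FreeAlgebra.ι k 2) g)
  | cu : GRel k g (FreeAlgebra.ι k 2 * FreeAlgebra.ι k 3)
      (FreeAlgebra.ι k 3 * FreeAlgebra.ι k 2)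
  | au : GRel k g (FreeAlgebra.ι k 0 * FreeAlgebra.ι k 3)
      (FreeAlgebra.ι k 3 * FreeAlgebra.ι k 0 +
        FreeAlgebra.ι k 3 * aeval (FreeAlgebra.ι k 2) g)
  | bc : GRel k g (FreeAlgebra.ι k 1 * FreeAlgebra.ι k 2)
      (FreeAlgebra.ι k 2 * FreeAlgebra.ι k 1 + FreeAlgebra.ι k 2 * Gγ k g)
  | bu : GRel k g (FreeAlgebra.ι k 1 * FreeAlgebra.ι k 3)
      (FreeAlgebra.ι k 3 * FreeAlgebra.ι k 1 + FreeAlgebra.ι k 3 * Gγ k g)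
  | ba : GRel k g (FreeAlgebra.ι k 1 * FreeAlgebra.ι k 0)
      ((FreeAlgebra.ι k 0 + Gh k g) * FreeAlgebra.ι k 1 +
        (Gh k g - FreeAlgebra.ι k 3) * FreeAlgebra.ι k 0)

/-- The generalized Jordanian matrix algebra `𝒢` (denoted `𝒢_f` for `f = X·g`). -/
abbrev GAlg (k : Type) [Field k] (g : k[X]) := RingQuot (GRel k g)

/-- The generator `a` of `𝒢`. -/
def Ga (k : Type) [Field k] (g : k[X]) : GAlg k g :=
  RingQuot.mkAlgHom k (GRel k g) (FreeAlgebra.ι k 0)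

/-- The generator `b` of `𝒢`. -/
def Gb (k : Type) [Field k] (g : k[X]) : GAlg k g :=
  RingQuot.mkAlgHom k (GRel k g) (FreeAlgebra.ι k 1)

/-- The generator `c` of `𝒢`. -/
def Gc (k : Type) [Field k] (g : k[X]) : GAlg k g :=
  RingQuot.mkAlgHom k (GRel k g) (FreeAlgebra.ι k 2)

/-- The generator `u` of `𝒢`. -/
def Gu (k : Type) [Field k] (g : k[X]) : GAlg k g :=
  RingQuot.mkAlgHom k (GRel k g) (FreeAlgebra.ι k 3)

/-- The central element `z = g(c)·b + (g(c) − u)·a − a²` of `𝒢`. -/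
def Gz (k : Type) [Field k] (g : k[X]) : GAlg k g :=
  aeval (Gc k g) g * Gb k g + (aeval (Gc k g) g - Gu k g) * Ga k g - Ga k g ^ 2

/-- Defining relations of the Jordanian matrix algebra `M_J(2)`: with `a = ι 0`, `b = ι 1`,
`c = ι 2`, `d = ι 3`, the relations are `a·c = c·a + c²`, `d·c = c·d + c²`,
`d·a = a·d − c·d + c·a`, `b·c = c·b + c·a + c·d + c²`, `b·d = d·b + c·b + c·d − a·d + d²`,
and `b·a = a·b + c·b + c·d − a·d + a²`. -/
inductive MJRel (k : Type) [Field k] :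
    FreeAlgebra k (Fin 4) → FreeAlgebra k (Fin 4) → Prop
  | ac : MJRel k (FreeAlgebra.ι k 0 * FreeAlgebra.ι k 2)
      (FreeAlgebra.ι k 2 * FreeAlgebra.ι k 0 + FreeAlgebra.ι k 2 ^ 2)
  | dc : MJRel k (FreeAlgebra.ι k 3 * FreeAlgebra.ι k 2)
      (FreeAlgebra.ι k 2 * FreeAlgebra.ι k 3 + FreeAlgebra.ι k 2 ^ 2)
  | da : MJRel k (FreeAlgebra.ι k 3 * FreeAlgebra.ι k 0)
      (FreeAlgebra.ι k 0 * FreeAlgebra.ι k 3 -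
        FreeAlgebra.ι k 2 * FreeAlgebra.ι k 3 +
        FreeAlgebra.ι k 2 * FreeAlgebra.ι k 0)
  | bc : MJRel k (FreeAlgebra.ι k 1 * FreeAlgebra.ι k 2)
      (FreeAlgebra.ι k 2 * FreeAlgebra.ι k 1 +
        FreeAlgebra.ι k 2 * FreeAlgebra.ι k 0 +
        FreeAlgebra.ι k 2 * FreeAlgebra.ι k 3 + FreeAlgebra.ι k 2 ^ 2)
  | bd : MJRel k (FreeAlgebra.ι k 1 * FreeAlgebra.ι k 3)
      (FreeAlgebra.ι k 3 * FreeAlgebra.ι k 1 +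
        FreeAlgebra.ι k 2 * FreeAlgebra.ι k 1 +
        FreeAlgebra.ι k 2 * FreeAlgebra.ι k 3 -
        FreeAlgebra.ι k 0 * FreeAlgebra.ι k 3 + FreeAlgebra.ι k 3 ^ 2)
  | ba : MJRel k (FreeAlgebra.ι k 1 * FreeAlgebra.ι k 0)
      (FreeAlgebra.ι k 0 * FreeAlgebra.ι k 1 +
        FreeAlgebra.ι k 2 * FreeAlgebra.ι k 1 +
        FreeAlgebra.ι k 2 * FreeAlgebra.ι k 3 -
        FreeAlgebra.ι k 0 * FreeAlgebra.ι k 3 + FreeAlgebra.ι k 0 ^ 2)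

/-- The Jordanian matrix algebra `M_J(2)`. -/
abbrev MJ (k : Type) [Field k] := RingQuot (MJRel k)


namespace Stmt18Aux

variable (k : Type) [Field k]

local notation "ι" => FreeAlgebra.ι k

/-- generator `a` of `M_J(2)`. -/
def MA : MJ k := RingQuot.mkAlgHom k (MJRel k) (ι 0)
/-- generator `b` of `M_J(2)`. -/
def MB : MJ k := RingQuot.mkAlgHom k (MJRel k) (ι 1)
/-- generator `c` of `M_J(2)`. -/
def MC : MJ k := RingQuot.mkAlgHom k (MJRel k) (ι 2)
/-- generator `d` of `M_J(2)`. -/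
def MD : MJ k := RingQuot.mkAlgHom k (MJRel k) (ι 3)

lemma mAC : MA k * MC k = MC k * MA k + MC k ^ 2 := by
  simpa only [MA, MC, map_mul, map_add, map_pow] using
    RingQuot.mkAlgHom_rel k (MJRel.ac (k := k))

lemma mDC : MD k * MC k = MC k * MD k + MC k ^ 2 := by
  simpa only [MC, MD, map_mul, map_add, map_pow] using
    RingQuot.mkAlgHom_rel k (MJRel.dc (k := k))

lemma mDA : MD k * MA k = MA k * MD k - MC k * MD k + MC k * MA k := by
  simpa only [MA, MC, MD, map_mul, map_add, map_sub] using
    RingQuot.mkAlgHom_rel k (MJRel.da (k := k))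

lemma mBC : MB k * MC k = MC k * MB k + MC k * MA k + MC k * MD k + MC k ^ 2 := by
  simpa only [MA, MB, MC, MD, map_mul, map_add, map_pow] using
    RingQuot.mkAlgHom_rel k (MJRel.bc (k := k))

lemma mBD : MB k * MD k = MD k * MB k + MC k * MB k + MC k * MD k
    - MA k * MD k + MD k ^ 2 := by
  simpa only [MA, MB, MC, MD, map_mul, map_add, map_sub, map_pow] using
    RingQuot.mkAlgHom_rel k (MJRel.bd (k := k))

lemma mBA : MB k * MA k = MA k * MB k + MC k * MB k + MC k * MD k
    - MA k * MD k + MA k ^ 2 := by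
  simpa only [MA, MB, MC, MD, map_mul, map_add, map_sub, map_pow] using
    RingQuot.mkAlgHom_rel k (MJRel.ba (k := k))

lemma gAC : Ga k X * Gc k X = Gc k X * Ga k X + Gc k X * Gc k X := by
  simpa only [Ga, Gc, map_mul, map_add, aeval_X] using
    RingQuot.mkAlgHom_rel k (GRel.ac (k := k) (g := X))

lemma gCU : Gc k X * Gu k X = Gu k X * Gc k X := by
  simpa only [Gc, Gu, map_mul] using
    RingQuot.mkAlgHom_rel k (GRel.cu (k := k) (g := X))

lemma gAU : Ga k X * Gu k X = Gu k X * Ga k X + Gu k X * Gc k X := by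
  simpa only [Ga, Gc, Gu, map_mul, map_add, aeval_X] using
    RingQuot.mkAlgHom_rel k (GRel.au (k := k) (g := X))

lemma gBC : Gb k X * Gc k X = Gc k X * Gb k X +
    Gc k X * (Gc k X + Gu k X + 2 * Ga k X) := by
  simpa only [Ga, Gb, Gc, Gu, Gγ, Gh, derivative_X, map_one, mul_one, map_mul,
    map_add, map_ofNat] using RingQuot.mkAlgHom_rel k (GRel.bc (k := k) (g := X))

lemma gBU : Gb k X * Gu k X = Gu k X * Gb k X +
    Gu k X * (Gc k X + Gu k X + 2 * Ga k X) := by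
  simpa only [Ga, Gb, Gc, Gu, Gγ, Gh, derivative_X, map_one, mul_one, map_mul,
    map_add, map_ofNat] using RingQuot.mkAlgHom_rel k (GRel.bu (k := k) (g := X))

lemma gBA : Gb k X * Ga k X = (Ga k X + Gc k X) * Gb k X +
    (Gc k X - Gu k X) * Ga k X := by
  simpa only [Ga, Gb, Gc, Gu, Gh, derivative_X, map_one, mul_one, map_mul,
    map_add, map_sub] using RingQuot.mkAlgHom_rel k (GRel.ba (k := k) (g := X))

/-- The target values of the map `𝒢 → M_J(2)` on generators. -/
def Ffun : Fin 4 → MJ k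
  | 0 => MA k
  | 1 => MB k
  | 2 => MC k
  | 3 => MD k - MA k

@[simp] lemma Ffun_zero : Ffun k 0 = MA k := rfl
@[simp] lemma Ffun_one : Ffun k 1 = MB k := rfl
@[simp] lemma Ffun_two : Ffun k 2 = MC k := rfl
@[simp] lemma Ffun_three : Ffun k 3 = MD k - MA k := rfl

/-- The target values of the map `M_J(2) → 𝒢` on generators. -/
def Hfun : Fin 4 → GAlg k X
  | 0 => Ga k X
  | 1 => Gb k X
  | 2 => Gc k X
  | 3 => Gu k X + Ga k X

@[simp] lemma Hfun_zero : Hfun k 0 = Ga k X := rfl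
@[simp] lemma Hfun_one : Hfun k 1 = Gb k X := rfl
@[simp] lemma Hfun_two : Hfun k 2 = Gc k X := rfl
@[simp] lemma Hfun_three : Hfun k 3 = Gu k X + Ga k X := rfl

def toMJfree : FreeAlgebra k (Fin 4) →ₐ[k] MJ k := FreeAlgebra.lift k (Ffun k)

def toGfree : FreeAlgebra k (Fin 4) →ₐ[k] GAlg k X := FreeAlgebra.lift k (Hfun k)

lemma toMJfree_rel : ∀ ⦃x y⦄, GRel k X x y → toMJfree k x = toMJfree k y := by
  intro x y h
  cases h <;>
    simp only [toMJfree, Gh, Gγ, derivative_X, map_one, mul_one, aeval_X,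
      map_mul, map_add, map_sub, map_ofNat, FreeAlgebra.lift_ι_apply,
      Ffun_zero, Ffun_one, Ffun_two, Ffun_three] <;>
    simp only [two_mul, pow_two, mul_sub, sub_mul, mul_add, add_mul, mAC, mDC, mDA, mBC, mBD, mBA] <;>
    first | abel | noncomm_ring

lemma toGfree_rel : ∀ ⦃x y⦄, MJRel k x y → toGfree k x = toGfree k y := by
  intro x y h
  cases h <;>
    simp only [toGfree, map_mul, map_add, map_sub, map_pow,
      FreeAlgebra.lift_ι_apply, Hfun_zero, Hfun_one, Hfun_two, Hfun_three] <;>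
    simp only [two_mul, mul_sub, sub_mul, mul_add, add_mul, pow_two, gAC, gCU, gAU, gBC,
      gBU, gBA] <;>
    first | abel | noncomm_ring

def φ : GAlg k X →ₐ[k] MJ k :=
  RingQuot.liftAlgHom k ⟨toMJfree k, toMJfree_rel k⟩

def ψ : MJ k →ₐ[k] GAlg k X :=
  RingQuot.liftAlgHom k ⟨toGfree k, toGfree_rel k⟩

@[simp] lemma φ_mk (x) : φ k (RingQuot.mkAlgHom k (GRel k X) x) = toMJfree k x :=
  RingQuot.liftAlgHom_mkAlgHom_apply k _ _ _

@[simp] lemma ψ_mk (x) : ψ k (RingQuot.mkAlgHom k (MJRel k) x) = toGfree k x :=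
  RingQuot.liftAlgHom_mkAlgHom_apply k _ _ _

lemma φψ : (φ k).comp (ψ k) = AlgHom.id k (MJ k) := by
  apply RingQuot.ringQuot_ext'
  apply FreeAlgebra.hom_ext
  funext i
  fin_cases i <;>
    simp [toGfree, toMJfree, Ga, Gb, Gc, Gu, MA, MB, MC, MD]

lemma ψφ : (ψ k).comp (φ k) = AlgHom.id k (GAlg k X) := by
  apply RingQuot.ringQuot_ext'
  apply FreeAlgebra.hom_ext
  funext i
  fin_cases i <;>
    simp [toGfree, toMJfree, Ga, Gb, Gc, Gu, MA, MB, MC, MD]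

def e : GAlg k X ≃ₐ[k] MJ k :=
  AlgEquiv.ofAlgHom (φ k) (ψ k) (φψ k) (ψφ k)

end Stmt18Aux

theorem stmt18 (k : Type) [Field k] [IsAlgClosed k] [CharZero k] :
    ∃ e : GAlg k X ≃ₐ[k] MJ k,
      e (Ga k X) = RingQuot.mkAlgHom k (MJRel k) (FreeAlgebra.ι k 0) ∧
      e (Gb k X) = RingQuot.mkAlgHom k (MJRel k) (FreeAlgebra.ι k 1) ∧
      e (Gc k X) = RingQuot.mkAlgHom k (MJRel k) (FreeAlgebra.ι k 2) ∧
      e (Gu k X) = RingQuot.mkAlgHom k (MJRel k) (FreeAlgebra.ι k 3) -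
        RingQuot.mkAlgHom k (MJRel k) (FreeAlgebra.ι k 0) := by
  refine ⟨Stmt18Aux.e k, ?_, ?_, ?_, ?_⟩ <;>
    simp [Stmt18Aux.e, Ga, Gb, Gc, Gu, Stmt18Aux.toMJfree,
      Stmt18Aux.MA, Stmt18Aux.MB, Stmt18Aux.MC, Stmt18Aux.MD]
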